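/- arXiv:2602.18725 — 2 statements merged into one kernel-verified Lean document; each statement's English description precedes it below -/
import Mathlib

section
/- Let $\mathbf{A} \in \mathbb{R}^{m\times m}$ be symmetric positive definite, let $\mathbf{m} \in \mathbb{R}^m$, $H \in \mathbb{R}$ with $(\mathbf{m}, H) \ne (0,0)$, let $\rho > 0$, $\alpha, \beta, c > 0$. Define $\phi : [0,\infty) \to \mathbb{R}$ by $\phi(\tilde\rho) = \rho + c\,\langle (2c\alpha\mathbf{A} + \tilde\rho I)^{-1}\mathbf{m},\; \alpha\mathbf{A}(2c\alpha\mathbf{A} + \tilde\rho I)^{-1}\mathbf{m}\rangle + c\,\beta H^2 (2c\beta + \tilde\rho)^{-2}$. Then $\phi$ is strictly decreasing on $(0,\infty)$, $\phi(0) > 0$, and there exists a unique $\rho^* \in (0,\infty)$ with $\phi(\rho^*) = \rho^*$. -/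
open Matrix

section ProxAux

variable {m : ℕ}

noncomputable def qf (B : Matrix (Fin m) (Fin m) ℝ) (mv : Fin m → ℝ) (t : ℝ) : ℝ :=
  ((B + t • 1)⁻¹ *ᵥ mv) ⬝ᵥ (B *ᵥ ((B + t • 1)⁻¹ *ᵥ mv))

lemma posSemidef_smul_one {r : ℝ} (hr : 0 ≤ r) :
    ((r • (1 : Matrix (Fin m) (Fin m) ℝ))).PosSemidef := by
  refine Matrix.PosSemidef.of_dotProduct_mulVec_nonneg ?_ ?_
  · unfold Matrix.IsHermitian
    ext i j
    simp [Matrix.one_apply, eq_comm]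
  · intro x
    simp only [smul_mulVec, one_mulVec, dotProduct_smul, smul_eq_mul]
    exact mul_nonneg hr (dotProduct_star_self_nonneg x)

lemma posDef_shift {B : Matrix (Fin m) (Fin m) ℝ} (hB : B.PosDef) {r : ℝ} (hr : 0 ≤ r) :
    (B + r • (1 : Matrix (Fin m) (Fin m) ℝ)).PosDef :=
  hB.add_posSemidef (posSemidef_smul_one hr)

lemma posDef_smul' {A : Matrix (Fin m) (Fin m) ℝ} (hA : A.PosDef) {a : ℝ} (ha : 0 < a) :
    (a • A).PosDef := by
  refine Matrix.PosDef.of_dotProduct_mulVec_pos ?_ ?_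
  · unfold Matrix.IsHermitian
    ext i j
    have := congrFun (congrFun hA.1 i) j
    simp only [Matrix.conjTranspose_apply, Matrix.smul_apply] at this ⊢
    simp only [star_trivial] at this ⊢
    rw [this]
  · intro x hx
    simp only [smul_mulVec, dotProduct_smul, smul_eq_mul]
    exact mul_pos ha (hA.dotProduct_mulVec_pos hx)

lemma sym_dot {B : Matrix (Fin m) (Fin m) ℝ} (hB : B.IsHermitian) (x y : Fin m → ℝ) :
    x ⬝ᵥ (B *ᵥ y) = (B *ᵥ x) ⬝ᵥ y := by
  have hBt : Bᵀ = B := by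
    ext i j
    have := congrFun (congrFun hB i) j
    simpa using this
  rw [Matrix.dotProduct_mulVec, ← Matrix.mulVec_transpose, hBt]

lemma qf_nonneg {B : Matrix (Fin m) (Fin m) ℝ} (hB : B.PosDef) (mv : Fin m → ℝ) (t : ℝ) :
    0 ≤ qf B mv t := by
  have := hB.posSemidef.dotProduct_mulVec_nonneg ((B + t • 1)⁻¹ *ᵥ mv)
  simpa [qf] using this

lemma qf_mono {B : Matrix (Fin m) (Fin m) ℝ} (hB : B.PosDef) (mv : Fin m → ℝ)
    {s r : ℝ} (hs : 0 ≤ s) (hsr : s < r) :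
    qf B mv r ≤ qf B mv s ∧ (mv ≠ 0 → qf B mv r < qf B mv s) := by
  set Ms := B + s • (1 : Matrix (Fin m) (Fin m) ℝ) with hMs
  set Mr := B + r • (1 : Matrix (Fin m) (Fin m) ℝ) with hMr
  have hMsd : Ms.PosDef := posDef_shift hB hs
  have hMrd : Mr.PosDef := posDef_shift hB (hs.trans hsr.le)
  have hMsu : IsUnit Ms.det := hMsd.det_pos.ne'.isUnit
  have hMru : IsUnit Mr.det := hMrd.det_pos.ne'.isUnit
  set xr := Mr⁻¹ *ᵥ mv with hxr
  set xs := Ms⁻¹ *ᵥ mv with hxs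
  set y := Ms⁻¹ *ᵥ xr with hy
  have hMrxr : Mr *ᵥ xr = mv := by
    rw [hxr, Matrix.mulVec_mulVec, Matrix.mul_nonsing_inv _ hMru, Matrix.one_mulVec]
  have hMsy : Ms *ᵥ y = xr := by
    rw [hy, Matrix.mulVec_mulVec, Matrix.mul_nonsing_inv _ hMsu, Matrix.one_mulVec]
  have hsplit : Mr = Ms + (r - s) • (1 : Matrix (Fin m) (Fin m) ℝ) := by
    rw [hMr, hMs, add_assoc, ← add_smul]
    ring_nf
  have hxs_eq : xs = xr + (r - s) • y := by
    have h1 : Ms *ᵥ (xr + (r - s) • y) = mv := by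
      rw [Matrix.mulVec_add, Matrix.mulVec_smul, hMsy, ← hMrxr, hsplit]
      simp only [hMs, Matrix.add_mulVec, smul_mulVec, Matrix.one_mulVec]
    rw [hxs, ← h1, Matrix.mulVec_mulVec, Matrix.nonsing_inv_mul _ hMsu, Matrix.one_mulVec]
  set d := r - s with hd
  have hdpos : 0 < d := sub_pos.mpr hsr
  have hqs : qf B mv s = xs ⬝ᵥ (B *ᵥ xs) := rfl
  have hqr : qf B mv r = xr ⬝ᵥ (B *ᵥ xr) := rfl
  have hyBx : y ⬝ᵥ (B *ᵥ xr) = (B *ᵥ y) ⬝ᵥ (B *ᵥ y) + s * (y ⬝ᵥ (B *ᵥ y)) := by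
    rw [← hMsy, hMs, Matrix.add_mulVec, smul_mulVec, Matrix.one_mulVec,
      Matrix.mulVec_add, Matrix.mulVec_smul, dotProduct_add, dotProduct_smul,
      sym_dot hB.1 y (B *ᵥ y)]
    simp [smul_eq_mul]
  have hxBy : xr ⬝ᵥ (B *ᵥ y) = y ⬝ᵥ (B *ᵥ xr) := by
    rw [sym_dot hB.1 xr y, dotProduct_comm, sym_dot hB.1 y xr]
  have hdiff : qf B mv s - qf B mv r
      = d * (2 * ((B *ᵥ y) ⬝ᵥ (B *ᵥ y) + s * (y ⬝ᵥ (B *ᵥ y))) + d * (y ⬝ᵥ (B *ᵥ y))) := by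
    rw [hqs, hqr, hxs_eq]
    rw [Matrix.mulVec_add, Matrix.mulVec_smul]
    rw [add_dotProduct, smul_dotProduct, dotProduct_add, dotProduct_add,
      dotProduct_smul, dotProduct_smul]
    simp only [smul_eq_mul]
    rw [hxBy, hyBx]
    ring
  have hBy_nn : 0 ≤ (B *ᵥ y) ⬝ᵥ (B *ᵥ y) := by
    classical
    exact Finset.sum_nonneg fun i _ => mul_self_nonneg _
  have hyBy_nn : 0 ≤ y ⬝ᵥ (B *ᵥ y) := by
    rcases eq_or_ne y 0 with h | h
    · simp [h]
    · have := hB.dotProduct_mulVec_pos h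
      simpa using this.le
  have hsQ : 0 ≤ s * (y ⬝ᵥ (B *ᵥ y)) := mul_nonneg hs hyBy_nn
  constructor
  · have inner : 0 ≤ 2 * ((B *ᵥ y) ⬝ᵥ (B *ᵥ y) + s * (y ⬝ᵥ (B *ᵥ y))) + d * (y ⬝ᵥ (B *ᵥ y)) := by
      have := mul_nonneg hdpos.le hyBy_nn
      linarith
    have := mul_nonneg hdpos.le inner
    linarith [hdiff]
  · intro hmv
    have hyne : y ≠ 0 := by
      intro h0
      apply hmv
      rw [← hMrxr, ← hMsy, h0, Matrix.mulVec_zero, Matrix.mulVec_zero]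
    have hyBy : 0 < y ⬝ᵥ (B *ᵥ y) := by simpa using hB.dotProduct_mulVec_pos hyne
    have inner : 0 < 2 * ((B *ᵥ y) ⬝ᵥ (B *ᵥ y) + s * (y ⬝ᵥ (B *ᵥ y))) + d * (y ⬝ᵥ (B *ᵥ y)) := by
      have := mul_pos hdpos hyBy
      linarith
    have := mul_pos hdpos inner
    linarith [hdiff]

set_option maxHeartbeats 1000000 in
lemma qf_cont {B : Matrix (Fin m) (Fin m) ℝ} (hB : B.PosDef) (mv : Fin m → ℝ) :
    ContinuousOn (qf B mv) (Set.Ici 0) := by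
  have hM : Continuous fun t : ℝ => B + t • (1 : Matrix (Fin m) (Fin m) ℝ) := by
    apply continuous_const.add
    exact (continuous_id.smul continuous_const)
  have hdet : Continuous fun t : ℝ => (B + t • (1 : Matrix (Fin m) (Fin m) ℝ)).det :=
    hM.matrix_det
  have hadj : Continuous fun t : ℝ => (B + t • (1 : Matrix (Fin m) (Fin m) ℝ)).adjugate :=
    hM.matrix_adjugate
  have hdet_ne : ∀ t ∈ Set.Ici (0:ℝ), (B + t • (1 : Matrix (Fin m) (Fin m) ℝ)).det ≠ 0 :=
    fun t ht => (posDef_shift hB ht).det_pos.ne'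
  have hg : ContinuousOn (fun t : ℝ => (B + t • (1 : Matrix (Fin m) (Fin m) ℝ))⁻¹ *ᵥ mv)
      (Set.Ici 0) := by
    apply ContinuousOn.congr (f := fun t : ℝ =>
      ((B + t • (1 : Matrix (Fin m) (Fin m) ℝ)).det)⁻¹ •
        ((B + t • (1 : Matrix (Fin m) (Fin m) ℝ)).adjugate *ᵥ mv))
    · exact (hdet.continuousOn.inv₀ hdet_ne).smul
        ((hadj.matrix_mulVec continuous_const).continuousOn)
    · intro t ht
      simp only [Matrix.inv_def, Ring.inverse_eq_inv', smul_mulVec]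
  have hdp : Continuous fun p : (Fin m → ℝ) × (Fin m → ℝ) => p.1 ⬝ᵥ (B *ᵥ p.2) :=
    continuous_fst.dotProduct (continuous_const.matrix_mulVec continuous_snd)
  exact hdp.comp_continuousOn (hg.prodMk hg)

end ProxAux

/-- Existence and uniqueness of the fixed point characterizing the proximal operator of
the kinetic-reaction integrand: the map
`φ(r) = ρ + c⟨(2cαA + rI)⁻¹ m, αA (2cαA + rI)⁻¹ m⟩ + cβH²(2cβ + r)⁻²`
is strictly decreasing on `(0,∞)`, positive at `0`, and has a unique fixed point in `(0,∞)`. -/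
theorem prox_fixed_point_exists_unique
    {m : ℕ} (A : Matrix (Fin m) (Fin m) ℝ) (hA : A.PosDef)
    (mv : Fin m → ℝ) (H ρ α β c : ℝ)
    (hne : ¬(mv = 0 ∧ H = 0))
    (hρ : 0 < ρ) (hα : 0 < α) (hβ : 0 < β) (hc : 0 < c) :
    StrictAntiOn
      (fun r : ℝ => ρ
        + c * ((((2 * c * α) • A + r • (1 : Matrix (Fin m) (Fin m) ℝ))⁻¹ *ᵥ mv) ⬝ᵥ
            ((α • A) *ᵥ (((2 * c * α) • A + r • (1 : Matrix (Fin m) (Fin m) ℝ))⁻¹ *ᵥ mv)))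
        + c * β * H ^ 2 / (2 * c * β + r) ^ 2)
      (Set.Ioi 0)
    ∧ 0 < (ρ
        + c * ((((2 * c * α) • A + (0:ℝ) • (1 : Matrix (Fin m) (Fin m) ℝ))⁻¹ *ᵥ mv) ⬝ᵥ
            ((α • A) *ᵥ (((2 * c * α) • A + (0:ℝ) • (1 : Matrix (Fin m) (Fin m) ℝ))⁻¹ *ᵥ mv)))
        + c * β * H ^ 2 / (2 * c * β + 0) ^ 2)
    ∧ ∃! r : ℝ, r ∈ Set.Ioi (0:ℝ) ∧
        (ρ
        + c * ((((2 * c * α) • A + r • (1 : Matrix (Fin m) (Fin m) ℝ))⁻¹ *ᵥ mv) ⬝ᵥ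
            ((α • A) *ᵥ (((2 * c * α) • A + r • (1 : Matrix (Fin m) (Fin m) ℝ))⁻¹ *ᵥ mv)))
        + c * β * H ^ 2 / (2 * c * β + r) ^ 2) = r := by
  set B := (2 * c * α) • A with hBdef
  have hB : B.PosDef := posDef_smul' hA (by positivity)
  set φ : ℝ → ℝ := fun r : ℝ => ρ
        + c * (((B + r • (1 : Matrix (Fin m) (Fin m) ℝ))⁻¹ *ᵥ mv) ⬝ᵥ
            ((α • A) *ᵥ ((B + r • (1 : Matrix (Fin m) (Fin m) ℝ))⁻¹ *ᵥ mv)))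
        + c * β * H ^ 2 / (2 * c * β + r) ^ 2 with hφdef
  have hαA : (α • A) = (2 * c)⁻¹ • B := by
    rw [hBdef, smul_smul]
    congr 1
    field_simp
  have hφ : ∀ r : ℝ, φ r = ρ + c * ((2 * c)⁻¹ * qf B mv r)
      + c * β * H ^ 2 / (2 * c * β + r) ^ 2 := by
    intro r
    rw [hφdef]
    simp only
    rw [hαA, smul_mulVec, dotProduct_smul, smul_eq_mul]
    rfl
  -- scalar part facts
  have hden : ∀ s : ℝ, 0 ≤ s → 0 < 2 * c * β + s := by
    intro s hs
    have : 0 < 2 * c * β := by positivity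
    linarith
  have hsc_le : ∀ s r : ℝ, 0 ≤ s → s < r →
      c * β * H ^ 2 / (2 * c * β + r) ^ 2 ≤ c * β * H ^ 2 / (2 * c * β + s) ^ 2 := by
    intro s r hs hsr
    have h1 : 0 < 2 * c * β + s := hden s hs
    have h2 : (2 * c * β + s) ^ 2 ≤ (2 * c * β + r) ^ 2 := by nlinarith
    have hnum : 0 ≤ c * β * H ^ 2 := by positivity
    exact div_le_div_of_nonneg_left hnum (by positivity) h2
  have hsc_lt : H ≠ 0 → ∀ s r : ℝ, 0 ≤ s → s < r →
      c * β * H ^ 2 / (2 * c * β + r) ^ 2 < c * β * H ^ 2 / (2 * c * β + s) ^ 2 := by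
    intro hH s r hs hsr
    have h1 : 0 < 2 * c * β + s := hden s hs
    have h2 : (2 * c * β + s) ^ 2 < (2 * c * β + r) ^ 2 := by nlinarith
    have hnum : 0 < c * β * H ^ 2 := by
      have : 0 < H ^ 2 := by positivity
      positivity
    exact div_lt_div_of_pos_left hnum (by positivity) h2
  have hsc_nonneg : ∀ r : ℝ, 0 ≤ r → 0 ≤ c * β * H ^ 2 / (2 * c * β + r) ^ 2 := by
    intro r hr
    have := hden r hr
    positivity
  have hq_nonneg : ∀ r : ℝ, 0 ≤ c * ((2 * c)⁻¹ * qf B mv r) := by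
    intro r
    have := qf_nonneg hB mv r
    positivity
  -- strict antitonicity
  have hstrict : StrictAntiOn φ (Set.Ioi 0) := by
    intro s hs r hr hsr
    have hs0 : (0:ℝ) ≤ s := (Set.mem_Ioi.mp hs).le
    rw [hφ s, hφ r]
    have hq := qf_mono hB mv hs0 hsr
    have hsc := hsc_le s r hs0 hsr
    have hcc : 0 < c * (2 * c)⁻¹ := by positivity
    rcases not_and_or.mp hne with hmv | hH
    · have hqs : qf B mv r < qf B mv s := hq.2 hmv
      have : c * ((2 * c)⁻¹ * qf B mv r) < c * ((2 * c)⁻¹ * qf B mv s) := by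
        have := mul_lt_mul_of_pos_left hqs hcc
        ring_nf at this ⊢
        linarith
      linarith
    · have hscs := hsc_lt hH s r hs0 hsr
      have : c * ((2 * c)⁻¹ * qf B mv r) ≤ c * ((2 * c)⁻¹ * qf B mv s) := by
        have := mul_le_mul_of_nonneg_left hq.1 hcc.le
        ring_nf at this ⊢
        linarith
      linarith
  -- weak antitonicity on Ici 0
  have hanti : ∀ s r : ℝ, 0 ≤ s → s ≤ r → φ r ≤ φ s := by
    intro s r hs hsr
    rcases eq_or_lt_of_le hsr with h | h
    · rw [h]
    · rw [hφ s, hφ r]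
      have hq := (qf_mono hB mv hs h).1
      have hsc := hsc_le s r hs h
      have hcc : 0 < c * (2 * c)⁻¹ := by positivity
      have : c * ((2 * c)⁻¹ * qf B mv r) ≤ c * ((2 * c)⁻¹ * qf B mv s) := by
        have := mul_le_mul_of_nonneg_left hq hcc.le
        ring_nf at this ⊢
        linarith
      linarith
  -- lower bound
  have hlb : ∀ r : ℝ, 0 ≤ r → ρ ≤ φ r := by
    intro r hr
    rw [hφ r]
    have := hq_nonneg r
    have := hsc_nonneg r hr
    linarith
  have hφ0pos : 0 < φ 0 := lt_of_lt_of_le hρ (hlb 0 le_rfl)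
  -- continuity on Ici 0
  have hcont : ContinuousOn φ (Set.Ici 0) := by
    have hfun : φ = fun r => ρ + c * ((2 * c)⁻¹ * qf B mv r)
        + c * β * H ^ 2 / (2 * c * β + r) ^ 2 := funext hφ
    rw [hfun]
    apply ContinuousOn.add
    · exact continuousOn_const.add
        (continuousOn_const.mul (continuousOn_const.mul (qf_cont hB mv)))
    · apply ContinuousOn.div continuousOn_const
      · exact ((continuous_const.add continuous_id).pow 2).continuousOn
      · intro r hr
        exact pow_ne_zero 2 (hden r hr).ne'
  -- existence via IVT
  set N := φ 0 + 1 with hN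
  have hN0 : (0:ℝ) ≤ N := by linarith
  have hIcc : Set.Icc (0:ℝ) N ⊆ Set.Ici 0 := fun x hx => hx.1
  have hFcont : ContinuousOn (fun r => φ r - r) (Set.Icc 0 N) :=
    (hcont.mono hIcc).sub continuousOn_id
  have hFN : φ N - N ≤ -1 := by
    have := hanti 0 N le_rfl hN0
    rw [hN]
    linarith
  have hF0 : 0 ≤ φ 0 - 0 := by linarith
  have hmem : (0:ℝ) ∈ Set.Icc (φ N - N) (φ 0 - 0) := ⟨by linarith, hF0⟩
  obtain ⟨rs, hrs_mem, hrs_eq⟩ := intermediate_value_Icc' hN0 hFcont hmem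
  have hfix : φ rs = rs := by
    have h : φ rs - rs = 0 := hrs_eq
    linarith
  have hrs_pos : 0 < rs := by
    have := hlb rs hrs_mem.1
    linarith [hfix]
  refine ⟨hstrict, hφ0pos, ⟨rs, ⟨Set.mem_Ioi.mpr hrs_pos, hfix⟩, ?_⟩⟩
  rintro y ⟨hy, hyfix⟩
  have hyfix' : φ y = y := hyfix
  by_contra hne'
  rcases lt_or_gt_of_ne hne' with h | h
  · have := hstrict hy (Set.mem_Ioi.mpr hrs_pos) h
    rw [hyfix', hfix] at this
    exact absurd this (not_lt.mpr h.le)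
  · have := hstrict (Set.mem_Ioi.mpr hrs_pos) hy h
    rw [hyfix', hfix] at this
    exact absurd this (not_lt.mpr h.le)
end

section
/- Let $\bar\rho_0, \bar\rho_1: X \to [0,\infty)$ be integrable densities on a measure space $X$. Define $\rho_t(x) = \big((1-t)\sqrt{\bar\rho_0(x)} + t\sqrt{\bar\rho_1(x)}\big)^2$ for $t\in[0,1]$ and $g_t = \partial_t\rho_t/\rho_t$ on $\{\rho_t > 0\}$. Then $(\rho_t, g_t)$ satisfies $\partial_t\rho_t = \rho_t g_t$, $\rho_0 = \bar\rho_0$, $\rho_1 = \bar\rho_1$, and its action satisfies $\int_0^1 \int_X g_t(x)^2\,\rho_t(x)\,dx\,dt = 4\int_X \big(\sqrt{\bar\rho_1(x)} - \sqrt{\bar\rho_0(x)}\big)^2\,dx$. -/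
open MeasureTheory intervalIntegral

/-- The explicit Hellinger geodesic `ρ_t = ((1-t)√ρ̄₀ + t√ρ̄₁)²` with growth rate
`g_t = ∂_t ρ_t / ρ_t` solves `∂_t ρ_t = ρ_t g_t`, interpolates the endpoints, and its
Fisher–Rao action equals `4∫(√ρ̄₁ - √ρ̄₀)²`. -/
theorem hellinger_geodesic_action
    {X : Type*} [MeasurableSpace X] (μ : Measure X) [SigmaFinite μ]
    (ρ₀ ρ₁ : X → ℝ)
    (hρ₀_nonneg : ∀ x, 0 ≤ ρ₀ x) (hρ₁_nonneg : ∀ x, 0 ≤ ρ₁ x)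
    (hρ₀_meas : Measurable ρ₀) (hρ₁_meas : Measurable ρ₁)
    (hρ₀_int : Integrable ρ₀ μ) (hρ₁_int : Integrable ρ₁ μ)
    (ρ : ℝ → X → ℝ) (g : ℝ → X → ℝ)
    (hρ_def : ∀ t x, ρ t x
      = ((1 - t) * Real.sqrt (ρ₀ x) + t * Real.sqrt (ρ₁ x)) ^ 2)
    (hg_def : ∀ t x, g t x = deriv (fun s => ρ s x) t / ρ t x) :
    (∀ x, ρ 0 x = ρ₀ x) ∧ (∀ x, ρ 1 x = ρ₁ x) ∧
    (∀ t x, HasDerivAt (fun s => ρ s x) (ρ t x * g t x) t) ∧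
    (∫ t in (0:ℝ)..1, ∫ x, g t x ^ 2 * ρ t x ∂μ)
      = 4 * ∫ x, (Real.sqrt (ρ₁ x) - Real.sqrt (ρ₀ x)) ^ 2 ∂μ := by
  -- notation
  set a : X → ℝ := fun x => Real.sqrt (ρ₀ x) with ha
  set b : X → ℝ := fun x => Real.sqrt (ρ₁ x) with hb
  have ha_nonneg : ∀ x, 0 ≤ a x := fun x => Real.sqrt_nonneg _
  have hb_nonneg : ∀ x, 0 ≤ b x := fun x => Real.sqrt_nonneg _
  -- key derivative fact
  have key : ∀ (t : ℝ) (x : X),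
      HasDerivAt (fun s => ρ s x)
        (2 * ((1 - t) * a x + t * b x) * (b x - a x)) t := by
    intro t x
    have hfun : (fun s => ρ s x) = fun s => ((1 - s) * a x + s * b x) ^ 2 :=
      funext fun s => hρ_def s x
    rw [hfun]
    have hA : HasDerivAt (fun s : ℝ => (1 - s) * a x) (-(a x)) t := by
      simpa using ((hasDerivAt_id t).const_sub 1).mul_const (a x)
    have hB : HasDerivAt (fun s : ℝ => s * b x) (b x) t := by
      simpa using (hasDerivAt_id t).mul_const (b x)
    have h2 : HasDerivAt (fun s => ((1 - s) * a x + s * b x) ^ 2)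
        (((2:ℕ):ℝ) * ((1 - t) * a x + t * b x) ^ (2 - 1) * (-(a x) + b x)) t :=
      (hA.add hB).fun_pow 2
    convert h2 using 1
    push_cast
    ring
  have hderiv : ∀ (t : ℝ) (x : X),
      deriv (fun s => ρ s x) t = 2 * ((1 - t) * a x + t * b x) * (b x - a x) :=
    fun t x => (key t x).deriv
  -- endpoints
  have h0 : ∀ x, ρ 0 x = ρ₀ x := by
    intro x
    rw [hρ_def]
    simpa using Real.sq_sqrt (hρ₀_nonneg x)
  have h1 : ∀ x, ρ 1 x = ρ₁ x := by
    intro x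
    rw [hρ_def]
    simpa using Real.sq_sqrt (hρ₁_nonneg x)
  refine ⟨h0, h1, ?_, ?_⟩
  · intro t x
    have heq : ρ t x * g t x = 2 * ((1 - t) * a x + t * b x) * (b x - a x) := by
      rw [hg_def, hderiv, hρ_def]
      rcases eq_or_ne ((1 - t) * a x + t * b x) 0 with hs | hs
      · simp [hs]
      · field_simp
        exact mul_div_cancel_left₀ _ hs
    rw [heq]
    exact key t x
  · -- the action computation
    have hinner : ∀ t ∈ Set.Ioo (0:ℝ) 1,
        (∫ x, g t x ^ 2 * ρ t x ∂μ) = ∫ x, 4 * (b x - a x) ^ 2 ∂μ := by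
      intro t ht
      refine integral_congr_ae (Filter.Eventually.of_forall fun x => ?_)
      show g t x ^ 2 * ρ t x = 4 * (b x - a x) ^ 2
      rw [hg_def, hderiv, hρ_def]
      rcases eq_or_ne ((1 - t) * a x + t * b x) 0 with hs | hs
      · have h1t : 0 ≤ (1 - t) * a x := mul_nonneg (by linarith [ht.2]) (ha_nonneg x)
        have h2t : 0 ≤ t * b x := mul_nonneg (le_of_lt ht.1) (hb_nonneg x)
        have hax : (1 - t) * a x = 0 := by linarith
        have hbx : t * b x = 0 := by linarith
        have hax' : a x = 0 := by
          rcases mul_eq_zero.mp hax with h | h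
          · exfalso; linarith [ht.2]
          · exact h
        have hbx' : b x = 0 := by
          rcases mul_eq_zero.mp hbx with h | h
          · exfalso; linarith [ht.1]
          · exact h
        rw [hs, hax', hbx']; simp
      · simp only [ha, hb] at hs ⊢
        field_simp
        ring
    have hle : (0:ℝ) ≤ 1 := by norm_num
    rw [intervalIntegral.integral_of_le hle, integral_Ioc_eq_integral_Ioo]
    rw [setIntegral_congr_fun measurableSet_Ioo (fun t ht => hinner t ht)]
    rw [setIntegral_const]
    rw [Real.volume_real_Ioo]
    simp only [sub_zero, ENNReal.ofReal_one, ENNReal.toReal_one, one_smul]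
    rw [max_eq_left zero_le_one, one_smul]
    exact MeasureTheory.integral_const_mul (4:ℝ) _
end
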